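/- arXiv:2510.23752 — 5 statements merged into one kernel-verified Lean document; each statement's English description precedes it below -/
import Mathlib

section
/- Let R be a unital ring, n a positive integer, and s = (s_{ij}) ∈ M_n(R) a family of matrix units for R, i.e., s_{11} + ... + s_{nn} = 1 and s_{ij}s_{kl} = s_{il} if j = k and 0 otherwise. Then, with S := s_{11} R s_{11}, the map M_n(S) → R sending a = (a_{ij}) to Σ_{i,j} s_{i1} a_{ij} s_{1j} is a ring isomorphism. -/
set_option maxHeartbeats 1000000 in
/-- Given a family of matrix units `s` in `Mₙ(R)` for a unital ring `R`, and the corner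
(non-unital) subring `S = s₁₁ R s₁₁`, the map `Mₙ(S) → R`, `a ↦ ∑ᵢⱼ sᵢ₁ aᵢⱼ s₁ⱼ`, is a
ring isomorphism. -/
theorem stmt_1 {R : Type*} [Ring R] (n : ℕ) (hn : 0 < n)
    (s : Matrix (Fin n) (Fin n) R)
    (hsum : ∑ i, s i i = 1)
    (hmul : ∀ i j k l, s i j * s k l = if j = k then s i l else 0)
    (S : NonUnitalSubring R)
    (hS : ∀ x : R, x ∈ S ↔ s ⟨0, hn⟩ ⟨0, hn⟩ * x * s ⟨0, hn⟩ ⟨0, hn⟩ = x) :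
    ∃ φ : Matrix (Fin n) (Fin n) S ≃+* R,
      ∀ a : Matrix (Fin n) (Fin n) S,
        φ a = ∑ i, ∑ j, s i ⟨0, hn⟩ * ((a i j : R)) * s ⟨0, hn⟩ j := by
  set z : Fin n := ⟨0, hn⟩ with hz
  have hleft : ∀ x : S, s z z * (x : R) = x := by
    intro x
    have h := (hS x).1 x.2
    conv_lhs => rw [← h]
    rw [← mul_assoc, ← mul_assoc, hmul]
    simp only [if_pos rfl]
    exact h
  have hleft' : ∀ (y : S) (w : R), s z z * ((y : R) * w) = (y : R) * w := by
    intro y w; rw [← mul_assoc, hleft]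
  have hmem : ∀ (r : R) (i j : Fin n), s z i * r * s j z ∈ S := by
    intro r i j
    rw [hS]
    have h1 : s z z * s z i = s z i := by rw [hmul]; simp
    have h2 : s j z * s z z = s j z := by rw [hmul]; simp
    calc s z z * (s z i * r * s j z) * s z z
        = (s z z * s z i) * r * (s j z * s z z) := by simp [mul_assoc]
      _ = s z i * r * s j z := by rw [h1, h2]
  have key : ∀ (x : R) (i k l j : Fin n),
      s z i * (s k z * x * s z l) * s j z
        = if i = k then (if l = j then s z z * x * s z z else 0) else 0 := by
    intro x i k l j
    have h : s z i * (s k z * x * s z l) * s j z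
        = (s z i * s k z) * x * (s z l * s j z) := by simp [mul_assoc]
    rw [h, hmul, hmul]
    by_cases h1 : i = k <;> by_cases h2 : l = j <;> simp [h1, h2]
  have termmul : ∀ (x y : S) (i k l j : Fin n),
      (s i z * (x : R) * s z k) * (s l z * (y : R) * s z j)
        = if k = l then s i z * ((x : R) * (y : R)) * s z j else 0 := by
    intro x y i k l j
    have h : (s i z * (x : R) * s z k) * (s l z * (y : R) * s z j)
        = s i z * (x : R) * (s z k * s l z) * ((y : R) * s z j) := by simp [mul_assoc]
    rw [h, hmul]
    by_cases hkl : k = l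
    · simp only [if_pos hkl]
      calc s i z * (x : R) * s z z * ((y : R) * s z j)
          = s i z * (x : R) * (s z z * ((y : R) * s z j)) := by rw [mul_assoc]
        _ = s i z * (x : R) * ((y : R) * s z j) := by rw [hleft']
        _ = s i z * ((x : R) * (y : R)) * s z j := by simp [mul_assoc]
    · simp [hkl]
  refine ⟨{ toFun := fun a => ∑ i, ∑ j, s i z * ((a i j : R)) * s z j,
            invFun := fun r i j => ⟨s z i * r * s j z, hmem r i j⟩,
            left_inv := ?_, right_inv := ?_, map_mul' := ?_, map_add' := ?_ },
          fun a => rfl⟩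
  · intro a
    funext i j
    ext
    simp only
    rw [Finset.mul_sum, Finset.sum_mul]
    simp only [Finset.mul_sum, Finset.sum_mul]
    calc (∑ k, ∑ l, s z i * (s k z * ((a k l : R)) * s z l) * s j z)
        = ∑ k, ∑ l, if i = k then (if l = j then ((a k l : R)) else 0) else 0 := by
          apply Finset.sum_congr rfl; intro k _
          apply Finset.sum_congr rfl; intro l _
          rw [key]
          have hA : ∀ p q : Fin n, s z z * ((a p q : R)) * s z z = ((a p q : R)) :=
            fun p q => (hS _).1 (a p q).2
          by_cases h1 : i = k <;> by_cases h2 : l = j <;> simp [h1, h2, hA]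
      _ = (a i j : R) := by simp
  · intro r
    simp only
    have term : ∀ i j : Fin n, s i z * (s z i * r * s j z) * s z j = s i i * r * s j j := by
      intro i j
      have h : s i z * (s z i * r * s j z) * s z j
          = (s i z * s z i) * r * (s j z * s z j) := by simp [mul_assoc]
      rw [h, hmul, hmul]; simp
    calc (∑ i, ∑ j, s i z * (s z i * r * s j z) * s z j)
        = ∑ i, ∑ j, s i i * r * s j j :=
          Finset.sum_congr rfl fun i _ => Finset.sum_congr rfl fun j _ => term i j
      _ = (∑ i, s i i) * r * (∑ j, s j j) := by
          rw [Finset.sum_mul, Finset.sum_mul]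
          apply Finset.sum_congr rfl; intro i _
          rw [Finset.mul_sum]
      _ = r := by rw [hsum]; simp
  · intro a b
    have expand : (∑ i, ∑ k, s i z * ((a i k : R)) * s z k) *
          (∑ l, ∑ j, s l z * ((b l j : R)) * s z j)
        = ∑ i, ∑ k, ∑ l, ∑ j,
            (s i z * ((a i k : R)) * s z k) * (s l z * ((b l j : R)) * s z j) := by
      rw [Finset.sum_mul]; apply Finset.sum_congr rfl; intro i _
      rw [Finset.sum_mul]; apply Finset.sum_congr rfl; intro k _
      rw [Finset.mul_sum]; apply Finset.sum_congr rfl; intro l _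
      rw [Finset.mul_sum]
    have lhs : ∀ i j : Fin n, s i z * (((a * b) i j : R)) * s z j
        = ∑ k, s i z * ((a i k : R) * (b k j : R)) * s z j := by
      intro i j
      have h : (((a * b) i j : R)) = ∑ k, (a i k : R) * (b k j : R) := by
        simp [Matrix.mul_apply]
      rw [h, Finset.mul_sum, Finset.sum_mul]
    calc (∑ i, ∑ j, s i z * (((a * b) i j : R)) * s z j)
        = ∑ i, ∑ j, ∑ k, s i z * ((a i k : R) * (b k j : R)) * s z j :=
          Finset.sum_congr rfl fun i _ => Finset.sum_congr rfl fun j _ => lhs i j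
      _ = ∑ i, ∑ k, ∑ j, s i z * ((a i k : R) * (b k j : R)) * s z j :=
          Finset.sum_congr rfl fun i _ => Finset.sum_comm
      _ = ∑ i, ∑ k, ∑ l, ∑ j,
            (s i z * ((a i k : R)) * s z k) * (s l z * ((b l j : R)) * s z j) := by
          apply Finset.sum_congr rfl; intro i _
          apply Finset.sum_congr rfl; intro k _
          symm
          calc (∑ l, ∑ j, (s i z * ((a i k : R)) * s z k) * (s l z * ((b l j : R)) * s z j))
              = ∑ l, ∑ j, (if k = l then s i z * ((a i k : R) * (b l j : R)) * s z j else 0) :=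
                Finset.sum_congr rfl fun l _ => Finset.sum_congr rfl fun j _ =>
                  termmul (a i k) (b l j) i k l j
            _ = ∑ j, s i z * ((a i k : R) * (b k j : R)) * s z j := by
                rw [Finset.sum_comm]
                simp
      _ = _ := expand.symm
  · intro a b
    simp only [Matrix.add_apply]
    push_cast
    simp [add_mul, mul_add, Finset.sum_add_distrib]
end

section
/- If a group G has uncountable strong cofinality, then every action of G by isometries on a metric space has only bounded orbits. -/
open Pointwise

/-- A group `G` has uncountable strong cofinality if for every ascending chain `(Wₙ)` of
subsets of `G` covering `G` there are `m, n` with `Wₙ^m = G`. -/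
def HasUncountableStrongCofinality (G : Type*) [Group G] : Prop :=
  ∀ W : ℕ → Set G, (∀ n, W n ⊆ W (n + 1)) → (⋃ n, W n) = Set.univ →
    ∃ m n : ℕ, W n ^ m = Set.univ

/-- If `G` has uncountable strong cofinality, then every action of `G` by isometries on a
metric space has only bounded orbits. -/
theorem stmt_7 {G X : Type*} [Group G] [MetricSpace X] [MulAction G X]
    (hiso : ∀ g : G, Isometry (fun x : X => g • x))
    (hG : HasUncountableStrongCofinality G) (x : X) :
    Bornology.IsBounded (MulAction.orbit G x) := by
  set W : ℕ → Set G := fun n => {g : G | dist (g • x) x ≤ n} with hW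
  have hmono : ∀ n, W n ⊆ W (n + 1) := by
    intro n g hg
    simp only [hW, Set.mem_setOf_eq] at hg ⊢
    push_cast
    linarith
  have hcover : (⋃ n, W n) = Set.univ := by
    ext g
    simp only [Set.mem_iUnion, Set.mem_univ, iff_true, hW, Set.mem_setOf_eq]
    exact ⟨⌈dist (g • x) x⌉₊, Nat.le_ceil _⟩
  obtain ⟨m, n, hmn⟩ := hG W hmono hcover
  have key : ∀ k : ℕ, ∀ g ∈ W n ^ k, dist (g • x) x ≤ k * n := by
    intro k
    induction k with
    | zero =>
      intro g hg
      simp only [pow_zero, Set.mem_one] at hg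
      simp [hg]
    | succ k ih =>
      intro g hg
      rw [pow_succ] at hg
      obtain ⟨a, ha, b, hb, rfl⟩ := hg
      have h1 : dist ((a * b) • x) (a • x) = dist (b • x) x := by
        rw [mul_smul]
        exact (hiso a).dist_eq (b • x) x
      calc dist ((a * b) • x) x ≤ dist ((a * b) • x) (a • x) + dist (a • x) x :=
            dist_triangle _ _ _
        _ ≤ n + k * n := by
            rw [h1]; exact add_le_add hb (ih a ha)
        _ = (k + 1 : ℕ) * n := by push_cast; ring
  apply Metric.isBounded_iff_subset_closedBall x |>.2
  refine ⟨m * n, ?_⟩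
  rintro y ⟨g, rfl⟩
  have hg : g ∈ W n ^ m := by rw [hmn]; trivial
  simpa [Metric.mem_closedBall] using key m g hg
end

section
/- If every action of a group G by isometries on a metric space has only bounded orbits, then G has the Bergman property: for every generating set S of G there exists n with G = (S ∪ S⁻¹ ∪ {1})ⁿ. -/
/-!
Word length with respect to `S ∪ S⁻¹ ∪ {1}` is a group norm on `G`, and `d(a, b) = |a⁻¹ b|` is a
metric on `G` for which left translations are isometries. The orbit of `1` under this action is
all of `G`, so its boundedness bounds the word length of every element by some `n`, which says
exactly that `(S ∪ S⁻¹ ∪ {1}) ^ n = G`.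
-/

open Pointwise

universe u

def BoundedIsometricOrbits (G : Type u) [Group G] : Prop :=
  ∀ (X : Type u) [MetricSpace X] [MulAction G X],
    (∀ g : G, Isometry (fun x : X => g • x)) → ∀ x : X, Bornology.IsBounded (MulAction.orbit G x)

namespace GroupNorm

variable {G : Type*} [Group G]

abbrev toLeftInvariantMetricSpace (N : GroupNorm G) : MetricSpace G where
  dist a b := N (a⁻¹ * b)
  dist_self a := by simp
  dist_comm a b := by rw [← map_inv_eq_map N, mul_inv_rev, inv_inv]
  dist_triangle a b c := by
    simpa only [mul_assoc, mul_inv_cancel_left] using map_mul_le_add N (a⁻¹ * b) (b⁻¹ * c)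
  eq_of_dist_eq_zero h := eq_of_inv_mul_eq_one (eq_one_of_map_eq_zero N h)

theorem bddAbove_range_of_boundedIsometricOrbits {G : Type u} [Group G]
    (hG : BoundedIsometricOrbits G) (N : GroupNorm G) : BddAbove (Set.range N) := by
  let := N.toLeftInvariantMetricSpace
  have hiso (g : G) : Isometry (fun x : G => g • x) :=
    Isometry.of_dist_eq fun x y => by
      change N ((g * x)⁻¹ * (g * y)) = N (x⁻¹ * y)
      rw [mul_inv_rev, mul_assoc, inv_mul_cancel_left]
  obtain ⟨C, hC⟩ := Metric.isBounded_iff.1 (hG G hiso 1)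
  refine ⟨C, ?_⟩
  rintro _ ⟨g, rfl⟩
  have h1g : dist 1 g ≤ C := hC (MulAction.mem_orbit_self 1) ⟨g, mul_one g⟩
  change N (1⁻¹ * g) ≤ C at h1g
  rwa [inv_one, one_mul] at h1g

end GroupNorm

section WordLength

variable {M : Type*} [Monoid M] {T : Set M}

/-- This is `0` when `g` is not a product of elements of `T`. -/
noncomputable def wordLength (T : Set M) (g : M) : ℕ :=
  sInf {n | g ∈ T ^ n}

theorem mem_pow_wordLength {g : M} (hg : ∃ n : ℕ, g ∈ T ^ n) : g ∈ T ^ wordLength T g :=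
  Nat.sInf_mem hg

theorem wordLength_le_of_mem_pow {g : M} {n : ℕ} (h : g ∈ T ^ n) : wordLength T g ≤ n :=
  Nat.sInf_le h

theorem wordLength_one : wordLength T 1 = 0 :=
  Nat.le_zero.1 (wordLength_le_of_mem_pow (by simp))

theorem eq_one_of_wordLength_eq_zero {g : M} (hg : ∃ n : ℕ, g ∈ T ^ n) (h : wordLength T g = 0) :
    g = 1 := by
  simpa [h] using mem_pow_wordLength hg

theorem wordLength_mul_le {g h : M} (hg : ∃ n : ℕ, g ∈ T ^ n) (hh : ∃ n : ℕ, h ∈ T ^ n) :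
    wordLength T (g * h) ≤ wordLength T g + wordLength T h :=
  wordLength_le_of_mem_pow <| pow_add T _ _ ▸
    Set.mul_mem_mul (mem_pow_wordLength hg) (mem_pow_wordLength hh)

end WordLength

section WordNorm

variable {G : Type*} [Group G] {T : Set G}

theorem inv_union_inv_union_one (S : Set G) : (S ∪ S⁻¹ ∪ {1})⁻¹ = S ∪ S⁻¹ ∪ {1} := by
  rw [Set.union_inv, Set.union_inv, inv_inv, Set.inv_singleton, inv_one, Set.union_comm S⁻¹]

theorem exists_mem_pow_of_closure_eq_top {S : Set G} (hS : Subgroup.closure S = ⊤) (g : G) :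
    ∃ n : ℕ, g ∈ (S ∪ S⁻¹ ∪ {1}) ^ n := by
  induction (hS ▸ Subgroup.mem_top g : g ∈ Subgroup.closure S) using Subgroup.closure_induction with
  | mem x hx => exact ⟨1, by simp [hx]⟩
  | one => exact ⟨0, by simp⟩
  | mul a b _ _ ha hb =>
    obtain ⟨m, hm⟩ := ha
    obtain ⟨n, hn⟩ := hb
    exact ⟨m + n, pow_add (S ∪ S⁻¹ ∪ {1}) m n ▸ Set.mul_mem_mul hm hn⟩
  | inv a _ ha =>
    obtain ⟨n, hn⟩ := ha
    exact ⟨n, by rwa [← inv_union_inv_union_one, inv_pow, Set.inv_mem_inv]⟩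

theorem wordLength_inv (hsymm : T⁻¹ = T) (g : G) : wordLength T g⁻¹ = wordLength T g := by
  unfold wordLength
  congr 1
  ext n
  change g⁻¹ ∈ T ^ n ↔ g ∈ T ^ n
  rw [← Set.mem_inv, ← inv_pow, hsymm]

noncomputable def wordNorm (hT : ∀ g : G, ∃ n : ℕ, g ∈ T ^ n) (hsymm : T⁻¹ = T) :
    GroupNorm G where
  toFun g := wordLength T g
  map_one' := by simp [wordLength_one]
  mul_le' g h := by exact_mod_cast wordLength_mul_le (hT g) (hT h)
  inv' g := by rw [wordLength_inv hsymm]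
  eq_one_of_map_eq_zero' g h := eq_one_of_wordLength_eq_zero (hT g) (by exact_mod_cast h)

end WordNorm

/-- If every isometric action of a group `G` on a metric space has only bounded orbits,
then `G` has the Bergman property. -/
theorem stmt_8 {G : Type u} [Group G]
    (hbd : ∀ (X : Type u) [MetricSpace X] [MulAction G X],
      (∀ g : G, Isometry (fun x : X => g • x)) →
      ∀ x : X, Bornology.IsBounded (MulAction.orbit G x)) :
    ∀ S : Set G, Subgroup.closure S = ⊤ →
      ∃ n : ℕ, (S ∪ S⁻¹ ∪ {1}) ^ n = Set.univ := by
  intro S hS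
  have hT := exists_mem_pow_of_closure_eq_top hS
  obtain ⟨C, hC⟩ := GroupNorm.bddAbove_range_of_boundedIsometricOrbits hbd
    (wordNorm hT (inv_union_inv_union_one S))
  refine ⟨⌊C⌋₊, Set.eq_univ_of_forall fun g => ?_⟩
  have hg : wordLength (S ∪ S⁻¹ ∪ {1}) g ≤ ⌊C⌋₊ := Nat.le_floor (hC ⟨g, rfl⟩)
  exact Set.pow_subset_pow_right (by simp) hg (mem_pow_wordLength (hT g))
end

section
/- Let R be a unital ring and let n ∈ ℕ with n ≥ 1 such that R has stable range at most n. Let G ⊆ GL_{n+1}(R) be the subgroup of block matrices diag(a, 1) with a ∈ GL_n(R), and let H₁ (resp. H₂) be the set of matrices of the form [[1_n, x],[0,1]] with x ∈ R^{n×1} (resp. [[1_n, 0],[x, 1]] with x ∈ R^{1×n}). Then GL_{n+1}(R) = H₁ G H₂ H₁ H₂. -/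
open Pointwise

set_option maxHeartbeats 1000000

section BassAux

variable {R : Type*} [Ring R] {n : ℕ}

/-- Upper unitriangular elementary unit. -/
def upperU (x : Matrix (Fin n) Unit R) : (Matrix (Fin n ⊕ Unit) (Fin n ⊕ Unit) R)ˣ where
  val := Matrix.fromBlocks 1 x 0 1
  inv := Matrix.fromBlocks 1 (-x) 0 1
  val_inv := by simp [Matrix.fromBlocks_multiply]
  inv_val := by simp [Matrix.fromBlocks_multiply]

/-- Lower unitriangular elementary unit. -/
def lowerU (x : Matrix Unit (Fin n) R) : (Matrix (Fin n ⊕ Unit) (Fin n ⊕ Unit) R)ˣ where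
  val := Matrix.fromBlocks 1 0 x 1
  inv := Matrix.fromBlocks 1 0 (-x) 1
  val_inv := by simp [Matrix.fromBlocks_multiply]
  inv_val := by simp [Matrix.fromBlocks_multiply]

end BassAux

/-- Bass's lemma: if `R` has stable range at most `n` (with `n ≥ 1`), then
`GL_{n+1}(R) = H₁ G H₂ H₁ H₂`, where `G` consists of the block matrices `diag(a,1)` with
`a ∈ GLₙ(R)`, `H₁` of upper unitriangular block matrices `[[1ₙ, x],[0,1]]`, and `H₂` of
lower unitriangular block matrices `[[1ₙ, 0],[x,1]]`. -/
theorem stmt_9 {R : Type*} [Ring R] (n : ℕ) (hn : 1 ≤ n)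
    (hsr : ∀ a : Fin (n + 1) → R, (∃ c : Fin (n + 1) → R, ∑ i, a i * c i = 1) →
      ∃ b c : Fin n → R, ∑ i : Fin n, (a i.castSucc + a (Fin.last n) * b i) * c i = 1) :
    ∀ G H₁ H₂ : Set (Matrix (Fin n ⊕ Unit) (Fin n ⊕ Unit) R)ˣ,
      G = {u : (Matrix (Fin n ⊕ Unit) (Fin n ⊕ Unit) R)ˣ |
        ∃ a : (Matrix (Fin n) (Fin n) R)ˣ,
          Units.val u = Matrix.fromBlocks (Units.val a) 0 0 1} →
      H₁ = {u : (Matrix (Fin n ⊕ Unit) (Fin n ⊕ Unit) R)ˣ |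
        ∃ x : Matrix (Fin n) Unit R, Units.val u = Matrix.fromBlocks 1 x 0 1} →
      H₂ = {u : (Matrix (Fin n ⊕ Unit) (Fin n ⊕ Unit) R)ˣ |
        ∃ x : Matrix Unit (Fin n) R, Units.val u = Matrix.fromBlocks 1 0 x 1} →
      H₁ * G * H₂ * H₁ * H₂ = Set.univ := by
  rintro G H₁ H₂ rfl rfl rfl
  rw [Set.eq_univ_iff_forall]
  intro u
  -- Block decomposition of u
  set A := u.val.toBlocks₁₁ with hA
  set p := u.val.toBlocks₁₂ with hp
  set q := u.val.toBlocks₂₁ with hq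
  set d := u.val.toBlocks₂₂ with hd
  have hM : u.val = Matrix.fromBlocks A p q d :=
    (Matrix.fromBlocks_toBlocks _).symm
  -- The last row of u is right unimodular
  have huni : ∃ c : Fin (n + 1) → R,
      ∑ i, (Fin.snoc (fun i => u.val (Sum.inr ()) (Sum.inl i))
        (u.val (Sum.inr ()) (Sum.inr ())) : Fin (n + 1) → R) i * c i = 1 := by
    refine ⟨Fin.snoc (fun i => u.inv (Sum.inl i) (Sum.inr ())) (u.inv (Sum.inr ()) (Sum.inr ())), ?_⟩
    have h1 : (u.val * u.inv) (Sum.inr ()) (Sum.inr ())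
        = 1 := by rw [u.val_inv]; simp
    rw [← h1, Matrix.mul_apply, Fintype.sum_sum_type, Fin.sum_univ_castSucc]
    simp only [Fintype.sum_unique, Fin.snoc_castSucc, Fin.snoc_last]
  obtain ⟨b, c', hbc⟩ := hsr _ huni
  simp only [Fin.snoc_castSucc, Fin.snoc_last] at hbc
  -- elementary matrices
  set xb : Matrix Unit (Fin n) R := Matrix.of (fun _ i => b i) with hxb
  set cc : Matrix (Fin n) Unit R := Matrix.of (fun i _ => c' i) with hcc
  set q₁ : Matrix Unit (Fin n) R := q + d * xb with hq₁
  have hq₁c : q₁ * cc = 1 := by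
    ext i j
    rw [Matrix.mul_apply]
    have : ∀ k : Fin n, q₁ i k * cc k j
        = (u.val (Sum.inr ()) (Sum.inl k)
            + u.val (Sum.inr ()) (Sum.inr ()) * b k)
          * c' k := by
      intro k
      simp [hq₁, hxb, hcc, Matrix.mul_apply, Matrix.add_apply, hq, hd, Matrix.toBlocks₂₁,
        Matrix.toBlocks₂₂]
    rw [Finset.sum_congr rfl fun k _ => this k, hbc]
    simp [Matrix.one_apply]
  set y : Matrix (Fin n) Unit R := cc * (1 - d) with hy
  have hd₂ : q₁ * y + d = 1 := by
    rw [hy, ← Matrix.mul_assoc, hq₁c, Matrix.one_mul]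
    abel
  set A₁ : Matrix (Fin n) (Fin n) R := A + p * xb with hA₁
  set p₂ : Matrix (Fin n) Unit R := A₁ * y + p with hp₂
  set B : Matrix (Fin n) (Fin n) R := A₁ + p₂ * -q₁ with hB
  set N : (Matrix (Fin n ⊕ Unit) (Fin n ⊕ Unit) R)ˣ := u * lowerU xb * upperU y * lowerU (-q₁)
    with hNdef
  have m1 : Matrix.fromBlocks A p q d * Matrix.fromBlocks (1 : Matrix (Fin n) (Fin n) R) 0 xb 1
      = Matrix.fromBlocks A₁ p q₁ d := by
    rw [hA₁, hq₁]; simp [Matrix.fromBlocks_multiply]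
  have m2 : Matrix.fromBlocks A₁ p q₁ d * Matrix.fromBlocks (1 : Matrix (Fin n) (Fin n) R) y 0 1
      = Matrix.fromBlocks A₁ p₂ q₁ 1 := by
    rw [hp₂]; simp [Matrix.fromBlocks_multiply, hd₂]
  have m3 : Matrix.fromBlocks A₁ p₂ q₁ 1
        * Matrix.fromBlocks (1 : Matrix (Fin n) (Fin n) R) 0 (-q₁) 1
      = Matrix.fromBlocks B p₂ 0 1 := by
    rw [hB]; simp [Matrix.fromBlocks_multiply]
  clear_value N
  have hN : N.val = Matrix.fromBlocks B p₂ 0 1 := by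
    rw [hNdef]
    show u.val * Matrix.fromBlocks (1 : Matrix (Fin n) (Fin n) R) 0 xb (1 : Matrix Unit Unit R)
        * Matrix.fromBlocks (1 : Matrix (Fin n) (Fin n) R) y 0 (1 : Matrix Unit Unit R)
        * Matrix.fromBlocks (1 : Matrix (Fin n) (Fin n) R) 0 (-q₁) (1 : Matrix Unit Unit R) = _
    rw [hM, m1, m2, m3]
  clear_value A p q d xb cc q₁ y A₁ p₂ B
  -- the top-left block of N is invertible
  have hNi : Matrix.fromBlocks B p₂ (0 : Matrix Unit (Fin n) R) 1 * N.inv = 1 := by rw [← hN]; exact N.val_inv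
  have hNi' : N.inv * Matrix.fromBlocks B p₂ (0 : Matrix Unit (Fin n) R) 1 = 1 := by rw [← hN]; exact N.inv_val
  set W := N.inv.toBlocks₁₁ with hW
  have hNinv : N.inv = Matrix.fromBlocks W N.inv.toBlocks₁₂ N.inv.toBlocks₂₁ N.inv.toBlocks₂₂ :=
    (Matrix.fromBlocks_toBlocks _).symm
  clear_value W
  rw [hNinv] at hNi hNi'
  rw [Matrix.fromBlocks_multiply] at hNi hNi'
  rw [show (1 : Matrix (Fin n ⊕ Unit) (Fin n ⊕ Unit) R) = Matrix.fromBlocks 1 0 0 1 from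
    Matrix.fromBlocks_one.symm] at hNi hNi'
  have hY : N.inv.toBlocks₂₁ = 0 := by
    have := congrArg Matrix.toBlocks₂₁ hNi
    simp only [Matrix.toBlocks_fromBlocks₂₁, Matrix.zero_mul, Matrix.one_mul, zero_add] at this
    exact this
  have hBW : B * W = 1 := by
    have := congrArg Matrix.toBlocks₁₁ hNi
    simp only [Matrix.toBlocks_fromBlocks₁₁, hY, Matrix.mul_zero, add_zero] at this
    exact this
  have hWB : W * B = 1 := by
    have := congrArg Matrix.toBlocks₁₁ hNi'
    simp only [Matrix.toBlocks_fromBlocks₁₁, Matrix.mul_zero, add_zero] at this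
    exact this
  set a : (Matrix (Fin n) (Fin n) R)ˣ := ⟨B, W, hBW, hWB⟩ with ha
  set g : (Matrix (Fin n ⊕ Unit) (Fin n ⊕ Unit) R)ˣ :=
    ⟨Matrix.fromBlocks B 0 0 1, Matrix.fromBlocks W 0 0 1,
      by simp [Matrix.fromBlocks_multiply, hBW],
      by simp [Matrix.fromBlocks_multiply, hWB]⟩ with hg
  have hNfact : N = upperU p₂ * g := by
    apply Units.ext
    rw [hN, Units.val_mul]
    show _ = Matrix.fromBlocks 1 p₂ 0 1 * Matrix.fromBlocks B 0 0 1
    simp [Matrix.fromBlocks_multiply]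
  have hufact : u = upperU p₂ * g * (lowerU (-q₁))⁻¹ * (upperU y)⁻¹ * (lowerU xb)⁻¹ := by
    rw [← hNfact, hNdef]
    group
  rw [hufact]
  refine Set.mul_mem_mul (Set.mul_mem_mul (Set.mul_mem_mul (Set.mul_mem_mul ?_ ?_) ?_) ?_) ?_
  · exact ⟨p₂, rfl⟩
  · exact ⟨a, rfl⟩
  · exact ⟨-(-q₁), rfl⟩
  · exact ⟨-y, rfl⟩
  · exact ⟨-xb, rfl⟩
end

section
/- Let n ≥ 2 and let R be a unital ring of stable range at most n. Let G ⊆ GL_{n+1}(R) be the subgroup of block matrices diag(a,1) with a ∈ GL_n(R), and let c ∈ GL_{n+1}(R) be the block permutation matrix [[0,1],[1_n,0]]. Then GL_{n+1}(R) = (G ∪ {c, c⁻¹})^{19}. -/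
open Pointwise

section Aux

open Matrix

/-- The cyclic block permutation matrix `c = [[0,1],[1ₙ,0]]` of size `n+1`, written in the
coordinates `Fin n ⊕ Unit`. -/
def cycMat (n : ℕ) (R : Type*) [Ring R] : Matrix (Fin n ⊕ Unit) (Fin n ⊕ Unit) R :=
  Matrix.of fun i j =>
    match i, j with
    | .inl k, .inr _ => if (k : ℕ) = 0 then 1 else 0
    | .inl k, .inl l => if (k : ℕ) = (l : ℕ) + 1 then 1 else 0
    | .inr _, .inl l => if (l : ℕ) = n - 1 then 1 else 0
    | .inr _, .inr _ => 0

namespace Stmt11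

variable {n : ℕ}

def tauFun (hn : 2 ≤ n) : (Fin n ⊕ Unit) → (Fin n ⊕ Unit) := fun x =>
  match x with
  | .inl k => if _ : (k : ℕ) = 0 then .inr () else .inl ⟨(k : ℕ) - 1, by have := k.isLt; omega⟩
  | .inr _ => .inl ⟨n - 1, by omega⟩

def tauInv (hn : 2 ≤ n) : (Fin n ⊕ Unit) → (Fin n ⊕ Unit) := fun x =>
  match x with
  | .inl k => if _ : (k : ℕ) = n - 1 then .inr () else .inl ⟨(k : ℕ) + 1, by have := k.isLt; omega⟩
  | .inr _ => .inl ⟨0, by omega⟩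

theorem tauFun_inl (hn : 2 ≤ n) (k : Fin n) :
    tauFun hn (.inl k) = if _ : (k : ℕ) = 0 then .inr () else
      .inl ⟨(k : ℕ) - 1, by have := k.isLt; omega⟩ := rfl

theorem tauFun_inr (hn : 2 ≤ n) (u : Unit) : tauFun hn (.inr u) = .inl ⟨n - 1, by omega⟩ := rfl

theorem tauInv_inl (hn : 2 ≤ n) (k : Fin n) :
    tauInv hn (.inl k) = if _ : (k : ℕ) = n - 1 then .inr () else
      .inl ⟨(k : ℕ) + 1, by have := k.isLt; omega⟩ := rfl

theorem tauInv_inr (hn : 2 ≤ n) (u : Unit) : tauInv hn (.inr u) = .inl ⟨0, by omega⟩ := rfl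

def tau (hn : 2 ≤ n) : (Fin n ⊕ Unit) ≃ (Fin n ⊕ Unit) where
  toFun := tauFun hn
  invFun := tauInv hn
  left_inv := by
    rintro (k | ⟨⟩) <;>
      [have hk := k.isLt; skip] <;>
      simp only [tauFun, tauInv] <;>
      split_ifs <;> simp_all [Fin.ext_iff, Fin.val_mk] <;> (try omega)
    all_goals (rw [dif_neg (by omega)]; simp [Fin.ext_iff]; omega)
  right_inv := by
    rintro (k | ⟨⟩) <;>
      [have hk := k.isLt; skip] <;>
      simp only [tauFun, tauInv] <;>
      split_ifs <;> simp_all [Fin.ext_iff, Fin.val_mk] <;> (try omega)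
    all_goals (rw [dif_neg (by omega)]; simp [Fin.ext_iff]; omega)

theorem tau_inl (hn : 2 ≤ n) (k : Fin n) :
    tau hn (.inl k) = if _ : (k : ℕ) = 0 then .inr () else
      .inl ⟨(k : ℕ) - 1, by have := k.isLt; omega⟩ := by
  simp only [tau, Equiv.coe_fn_mk, tauFun]

theorem tau_inr (hn : 2 ≤ n) (u : Unit) : tau hn (.inr u) = .inl ⟨n - 1, by omega⟩ := by
  simp only [tau, Equiv.coe_fn_mk, tauFun]

theorem tau_symm_inl (hn : 2 ≤ n) (k : Fin n) :
    (tau hn).symm (.inl k) = if _ : (k : ℕ) = n - 1 then .inr () else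
      .inl ⟨(k : ℕ) + 1, by have := k.isLt; omega⟩ := by
  simp only [tau, Equiv.symm, Equiv.coe_fn_mk, tauInv]

theorem tau_symm_inr (hn : 2 ≤ n) (u : Unit) : (tau hn).symm (.inr u) = .inl ⟨0, by omega⟩ := by
  simp only [tau, Equiv.symm, Equiv.coe_fn_mk, tauInv]

theorem cycMat_eq {R : Type*} [Ring R] (hn : 2 ≤ n) :
    cycMat n R = (tau hn).toPEquiv.toMatrix := by
  ext i j
  simp only [PEquiv.toMatrix_apply, Equiv.toPEquiv_apply, Option.mem_def, Option.some.injEq]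
  rcases i with k | ⟨⟩ <;> rcases j with l | ⟨⟩
  · have hk := k.isLt
    show (if (k : ℕ) = (l : ℕ) + 1 then (1 : R) else 0) = _
    rw [tau_inl]
    split_ifs with h1 h2 h2 h3 h2 h3 <;>
      simp_all [Fin.ext_iff, Fin.val_mk] <;> omega
  · have hk := k.isLt
    show (if (k : ℕ) = 0 then (1 : R) else 0) = _
    rw [tau_inl]
    split_ifs with h1 h2 h2 h3 h2 h3 <;>
      simp_all [Fin.ext_iff, Fin.val_mk] <;> omega
  · have hl := l.isLt
    show (if (l : ℕ) = n - 1 then (1 : R) else 0) = _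
    rw [tau_inr]
    split_ifs with h1 h2 h2 h3 h2 h3 <;>
      simp_all [Fin.ext_iff, Fin.val_mk] <;> omega
  · show (0 : R) = _
    rw [tau_inr, if_neg (by simp)]

end Stmt11

end Aux

section P2
namespace Stmt11

variable {R : Type*} [Ring R] {n : ℕ}

/-- Lower block unipotent `[[1,0],[v,1]]`. -/
def Lb (v : Fin n → R) : Matrix (Fin n ⊕ Unit) (Fin n ⊕ Unit) R :=
  Matrix.fromBlocks 1 0 (Matrix.of fun _ j => v j) 1

/-- Upper block unipotent `[[1,w],[0,1]]`. -/
def Ub (w : Fin n → R) : Matrix (Fin n ⊕ Unit) (Fin n ⊕ Unit) R :=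
  Matrix.fromBlocks 1 (Matrix.of fun i _ => w i) 0 1

@[simp] theorem Lb_apply₁₁ (v : Fin n → R) (k l : Fin n) :
    Lb v (.inl k) (.inl l) = if k = l then 1 else 0 := by
  simp [Lb, Matrix.one_apply]

@[simp] theorem Lb_apply₁₂ (v : Fin n → R) (k : Fin n) (u : Unit) :
    Lb v (.inl k) (.inr u) = 0 := by simp [Lb]

@[simp] theorem Lb_apply₂₁ (v : Fin n → R) (u : Unit) (l : Fin n) :
    Lb v (.inr u) (.inl l) = v l := by simp [Lb]

@[simp] theorem Lb_apply₂₂ (v : Fin n → R) (u u' : Unit) :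
    Lb v (.inr u) (.inr u') = 1 := by simp [Lb, Matrix.one_apply]

@[simp] theorem Ub_apply₁₁ (w : Fin n → R) (k l : Fin n) :
    Ub w (.inl k) (.inl l) = if k = l then 1 else 0 := by
  simp [Ub, Matrix.one_apply]

@[simp] theorem Ub_apply₁₂ (w : Fin n → R) (k : Fin n) (u : Unit) :
    Ub w (.inl k) (.inr u) = w k := by simp [Ub]

@[simp] theorem Ub_apply₂₁ (w : Fin n → R) (u : Unit) (l : Fin n) :
    Ub w (.inr u) (.inl l) = 0 := by simp [Ub]

@[simp] theorem Ub_apply₂₂ (w : Fin n → R) (u u' : Unit) :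
    Ub w (.inr u) (.inr u') = 1 := by simp [Ub, Matrix.one_apply]

theorem mul_Lb_inl' (M : Matrix (Fin n ⊕ Unit) (Fin n ⊕ Unit) R) (v : Fin n → R)
    (i : Fin n ⊕ Unit) (l : Fin n) :
    (M * Lb v) i (.inl l) = M i (.inl l) + M i (.inr ()) * v l := by
  rw [Matrix.mul_apply, Fintype.sum_sum_type]
  simp [mul_ite, Finset.sum_ite_eq']

theorem mul_Lb_inr' (M : Matrix (Fin n ⊕ Unit) (Fin n ⊕ Unit) R) (v : Fin n → R)
    (i : Fin n ⊕ Unit) (u : Unit) :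
    (M * Lb v) i (.inr u) = M i (.inr ()) := by
  rw [Matrix.mul_apply, Fintype.sum_sum_type]
  simp

theorem mul_Ub_inl' (M : Matrix (Fin n ⊕ Unit) (Fin n ⊕ Unit) R) (w : Fin n → R)
    (i : Fin n ⊕ Unit) (l : Fin n) :
    (M * Ub w) i (.inl l) = M i (.inl l) := by
  rw [Matrix.mul_apply, Fintype.sum_sum_type]
  simp [mul_ite, Finset.sum_ite_eq']

theorem mul_Ub_inr' (M : Matrix (Fin n ⊕ Unit) (Fin n ⊕ Unit) R) (w : Fin n → R)
    (i : Fin n ⊕ Unit) (u : Unit) :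
    (M * Ub w) i (.inr u) = M i (.inr ()) + ∑ k, M i (.inl k) * w k := by
  rw [Matrix.mul_apply, Fintype.sum_sum_type]
  simp [add_comm]

theorem Lb_mul_Lb (v v' : Fin n → R) : Lb v * Lb v' = Lb (v + v') := by
  ext i j
  rcases j with l | u
  · rw [mul_Lb_inl']
    rcases i with k | u' <;> simp
  · rw [mul_Lb_inr']
    rcases i with k | u' <;> simp

theorem Ub_mul_Ub (w w' : Fin n → R) : Ub w * Ub w' = Ub (w + w') := by
  ext i j
  rcases j with l | u
  · rw [mul_Ub_inl']
    rcases i with k | u' <;> simp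
  · rw [mul_Ub_inr']
    rcases i with k | u' <;> simp [Finset.sum_ite_eq]

theorem Lb_zero : Lb (0 : Fin n → R) = 1 := by
  ext i j
  rcases i with k | u <;> rcases j with l | u' <;> simp [Matrix.one_apply]

theorem Ub_zero : Ub (0 : Fin n → R) = 1 := by
  ext i j
  rcases i with k | u <;> rcases j with l | u' <;> simp [Matrix.one_apply]

/-- `Lb v` as a unit. -/
def Lu (v : Fin n → R) : (Matrix (Fin n ⊕ Unit) (Fin n ⊕ Unit) R)ˣ where
  val := Lb v
  inv := Lb (-v)
  val_inv := by rw [Lb_mul_Lb]; simp [Lb_zero]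
  inv_val := by rw [Lb_mul_Lb]; simp [Lb_zero]

def Uu (w : Fin n → R) : (Matrix (Fin n ⊕ Unit) (Fin n ⊕ Unit) R)ˣ where
  val := Ub w
  inv := Ub (-w)
  val_inv := by rw [Ub_mul_Ub]; simp [Ub_zero]
  inv_val := by rw [Ub_mul_Ub]; simp [Ub_zero]

@[simp] theorem Lu_val (v : Fin n → R) : (Lu v).val = Lb v := rfl
@[simp] theorem Uu_val (w : Fin n → R) : (Uu w).val = Ub w := rfl

theorem Lu_mul (v v' : Fin n → R) : Lu v * Lu v' = Lu (v + v') :=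
  Units.ext (Lb_mul_Lb v v')

theorem Uu_mul (w w' : Fin n → R) : Uu w * Uu w' = Uu (w + w') :=
  Units.ext (Ub_mul_Ub w w')

theorem Lu_inv (v : Fin n → R) : (Lu v)⁻¹ = Lu (-v) := by
  apply Units.ext; rfl

theorem Uu_inv (w : Fin n → R) : (Uu w)⁻¹ = Uu (-w) := by
  apply Units.ext; rfl

theorem Ub_mul_inl (w : Fin n → R) (M : Matrix (Fin n ⊕ Unit) (Fin n ⊕ Unit) R)
    (k : Fin n) (j : Fin n ⊕ Unit) :
    (Ub w * M) (.inl k) j = M (.inl k) j + w k * M (.inr ()) j := by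
  rw [Matrix.mul_apply, Fintype.sum_sum_type]
  simp [ite_mul, Finset.sum_ite_eq]

theorem Ub_mul_inr (w : Fin n → R) (M : Matrix (Fin n ⊕ Unit) (Fin n ⊕ Unit) R)
    (u : Unit) (j : Fin n ⊕ Unit) :
    (Ub w * M) (.inr u) j = M (.inr ()) j := by
  rw [Matrix.mul_apply, Fintype.sum_sum_type]
  simp

end Stmt11
end P2

section P3
namespace Stmt11

open Matrix

variable {R : Type*} [Ring R] {n : ℕ}

/-- The subgroup `G` of `GL_{n+1}(R)`. -/
def Gset (n : ℕ) (R : Type*) [Ring R] : Set (Matrix (Fin n ⊕ Unit) (Fin n ⊕ Unit) R)ˣ :=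
  {u | ∃ a : (Matrix (Fin n) (Fin n) R)ˣ, u.val = Matrix.fromBlocks a.val 0 0 1}

theorem mem_Gset (u : (Matrix (Fin n ⊕ Unit) (Fin n ⊕ Unit) R)ˣ)
    (h12 : ∀ k, u.val (.inl k) (.inr ()) = 0)
    (h21 : ∀ l, u.val (.inr ()) (.inl l) = 0)
    (h22 : u.val (.inr ()) (.inr ()) = 1) : u ∈ Gset n R := by
  have hB1 : (1 : Matrix (Fin n ⊕ Unit) (Fin n ⊕ Unit) R).toBlocks₁₁ = 1 := by
    ext k l
    simp [Matrix.toBlocks₁₁, Matrix.one_apply, Sum.inl.injEq]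
  have hY : u.val = fromBlocks (u.val.toBlocks₁₁) 0 0 1 := by
    ext i j
    rcases i with k | u' <;> rcases j with l | u''
    · simp [Matrix.fromBlocks_apply₁₁, Matrix.toBlocks₁₁]
    · simpa [Matrix.fromBlocks_apply₁₂] using h12 k
    · simpa [Matrix.fromBlocks_apply₂₁] using h21 l
    · simpa [Matrix.fromBlocks_apply₂₂, Matrix.one_apply] using h22
  have hZ : u.inv = fromBlocks (u.inv.toBlocks₁₁) (u.inv.toBlocks₁₂)
      (u.inv.toBlocks₂₁) (u.inv.toBlocks₂₂) := (Matrix.fromBlocks_toBlocks _).symm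
  have hvi : u.val * u.inv = 1 := u.val_inv
  have hiv : u.inv * u.val = 1 := u.inv_val
  rw [hY, hZ, Matrix.fromBlocks_multiply] at hvi
  rw [hZ, hY, Matrix.fromBlocks_multiply] at hiv
  have h1 : u.val.toBlocks₁₁ * u.inv.toBlocks₁₁ = 1 := by
    have h := congrArg Matrix.toBlocks₁₁ hvi
    rw [Matrix.toBlocks_fromBlocks₁₁, hB1, Matrix.zero_mul, add_zero] at h
    exact h
  have h2 : u.inv.toBlocks₁₁ * u.val.toBlocks₁₁ = 1 := by
    have h := congrArg Matrix.toBlocks₁₁ hiv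
    rw [Matrix.toBlocks_fromBlocks₁₁, hB1, Matrix.mul_zero, add_zero] at h
    exact h
  exact ⟨⟨u.val.toBlocks₁₁, u.inv.toBlocks₁₁, h1, h2⟩, hY⟩

theorem Gset_mul {u v : (Matrix (Fin n ⊕ Unit) (Fin n ⊕ Unit) R)ˣ}
    (hu : u ∈ Gset n R) (hv : v ∈ Gset n R) : u * v ∈ Gset n R := by
  obtain ⟨a, ha⟩ := hu
  obtain ⟨b, hb⟩ := hv
  refine ⟨a * b, ?_⟩
  rw [Units.val_mul, ha, hb, Matrix.fromBlocks_multiply]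
  simp

theorem one_mem_Gset : (1 : (Matrix (Fin n ⊕ Unit) (Fin n ⊕ Unit) R)ˣ) ∈ Gset n R :=
  ⟨1, by simp [Matrix.fromBlocks_one]⟩

section Conj

variable (hn : 2 ≤ n) (c : (Matrix (Fin n ⊕ Unit) (Fin n ⊕ Unit) R)ˣ)
  (hc : Units.val c = cycMat n R)

include hn hc

theorem cval : c.val = (tau hn).toPEquiv.toMatrix := hc.trans (cycMat_eq hn)

theorem cinv : (c⁻¹).val = (tau hn).symm.toPEquiv.toMatrix := by
  apply Units.inv_eq_of_mul_eq_one_right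
  rw [cval hn c hc, ← PEquiv.toMatrix_trans, ← Equiv.toPEquiv_trans]
  simp [Equiv.self_trans_symm, Equiv.toPEquiv_refl, PEquiv.toMatrix_refl]

theorem conj_apply (M : Matrix (Fin n ⊕ Unit) (Fin n ⊕ Unit) R) (i j : Fin n ⊕ Unit) :
    (c.val * M * (c⁻¹).val) i j = M (tau hn i) (tau hn j) := by
  rw [cval hn c hc, cinv hn c hc, PEquiv.toMatrix_toPEquiv_mul, PEquiv.mul_toMatrix_toPEquiv]
  simp

theorem conj_apply' (M : Matrix (Fin n ⊕ Unit) (Fin n ⊕ Unit) R) (i j : Fin n ⊕ Unit) :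
    ((c⁻¹).val * M * c.val) i j = M ((tau hn).symm i) ((tau hn).symm j) := by
  rw [cval hn c hc, cinv hn c hc, PEquiv.toMatrix_toPEquiv_mul, PEquiv.mul_toMatrix_toPEquiv]
  simp

theorem conjL_mem (v : Fin n → R) (hv : ∀ k : Fin n, (k : ℕ) = n - 1 → v k = 0) :
    c * Lu v * c⁻¹ ∈ Gset n R := by
  have hval : ∀ i j, ((c * Lu v * c⁻¹).val) i j = Lb v (tau hn i) (tau hn j) := by
    intro i j
    rw [Units.val_mul, Units.val_mul, Lu_val]
    exact conj_apply hn c hc (Lb v) i j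
  apply mem_Gset
  · intro k
    rw [hval, tau_inr]
    by_cases h0 : (k : ℕ) = 0
    · rw [tau_inl, dif_pos h0, Lb_apply₂₁]
      exact hv _ (by simp)
    · rw [tau_inl, dif_neg h0, Lb_apply₁₁, if_neg (by
        have := k.isLt; simp only [Fin.ext_iff, Fin.val_mk]; omega)]
  · intro l
    rw [hval, tau_inr]
    by_cases h0 : (l : ℕ) = 0
    · rw [tau_inl, dif_pos h0, Lb_apply₁₂]
    · rw [tau_inl, dif_neg h0, Lb_apply₁₁, if_neg (by
        have := l.isLt; simp only [Fin.ext_iff, Fin.val_mk]; omega)]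
  · rw [hval, tau_inr, Lb_apply₁₁, if_pos rfl]

theorem conjL_mem' (v : Fin n → R) (hv : ∀ k : Fin n, (k : ℕ) = 0 → v k = 0) :
    c⁻¹ * Lu v * c ∈ Gset n R := by
  have hval : ∀ i j, ((c⁻¹ * Lu v * c).val) i j = Lb v ((tau hn).symm i) ((tau hn).symm j) := by
    intro i j
    rw [Units.val_mul, Units.val_mul, Lu_val]
    exact conj_apply' hn c hc (Lb v) i j
  apply mem_Gset
  · intro k
    rw [hval, tau_symm_inr]
    by_cases h0 : (k : ℕ) = n - 1
    · rw [tau_symm_inl, dif_pos h0, Lb_apply₂₁]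
      exact hv _ (by simp)
    · rw [tau_symm_inl, dif_neg h0, Lb_apply₁₁, if_neg (by
        simp only [Fin.ext_iff, Fin.val_mk]; omega)]
  · intro l
    rw [hval, tau_symm_inr]
    by_cases h0 : (l : ℕ) = n - 1
    · rw [tau_symm_inl, dif_pos h0, Lb_apply₁₂]
    · rw [tau_symm_inl, dif_neg h0, Lb_apply₁₁, if_neg (by
        simp only [Fin.ext_iff, Fin.val_mk]; omega)]
  · rw [hval, tau_symm_inr, Lb_apply₁₁, if_pos rfl]

theorem conjU_mem (w : Fin n → R) (hw : ∀ k : Fin n, (k : ℕ) = n - 1 → w k = 0) :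
    c * Uu w * c⁻¹ ∈ Gset n R := by
  have hval : ∀ i j, ((c * Uu w * c⁻¹).val) i j = Ub w (tau hn i) (tau hn j) := by
    intro i j
    rw [Units.val_mul, Units.val_mul, Uu_val]
    exact conj_apply hn c hc (Ub w) i j
  apply mem_Gset
  · intro k
    rw [hval, tau_inr]
    by_cases h0 : (k : ℕ) = 0
    · rw [tau_inl, dif_pos h0, Ub_apply₂₁]
    · rw [tau_inl, dif_neg h0, Ub_apply₁₁, if_neg (by
        have := k.isLt; simp only [Fin.ext_iff, Fin.val_mk]; omega)]
  · intro l
    rw [hval, tau_inr]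
    by_cases h0 : (l : ℕ) = 0
    · rw [tau_inl, dif_pos h0, Ub_apply₁₂]
      exact hw _ (by simp)
    · rw [tau_inl, dif_neg h0, Ub_apply₁₁, if_neg (by
        have := l.isLt; simp only [Fin.ext_iff, Fin.val_mk]; omega)]
  · rw [hval, tau_inr, Ub_apply₁₁, if_pos rfl]

theorem conjU_mem' (w : Fin n → R) (hw : ∀ k : Fin n, (k : ℕ) = 0 → w k = 0) :
    c⁻¹ * Uu w * c ∈ Gset n R := by
  have hval : ∀ i j, ((c⁻¹ * Uu w * c).val) i j = Ub w ((tau hn).symm i) ((tau hn).symm j) := by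
    intro i j
    rw [Units.val_mul, Units.val_mul, Uu_val]
    exact conj_apply' hn c hc (Ub w) i j
  apply mem_Gset
  · intro k
    rw [hval, tau_symm_inr]
    by_cases h0 : (k : ℕ) = n - 1
    · rw [tau_symm_inl, dif_pos h0, Ub_apply₂₁]
    · rw [tau_symm_inl, dif_neg h0, Ub_apply₁₁, if_neg (by
        simp only [Fin.ext_iff, Fin.val_mk]; omega)]
  · intro l
    rw [hval, tau_symm_inr]
    by_cases h0 : (l : ℕ) = n - 1
    · rw [tau_symm_inl, dif_pos h0, Ub_apply₁₂]
      exact hw _ (by simp)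
    · rw [tau_symm_inl, dif_neg h0, Ub_apply₁₁, if_neg (by
        simp only [Fin.ext_iff, Fin.val_mk]; omega)]
  · rw [hval, tau_symm_inr, Ub_apply₁₁, if_pos rfl]

end Conj
end Stmt11
end P3

section P4
namespace Stmt11

open Matrix Pointwise

variable {R : Type*} [Ring R] {n : ℕ}

theorem Lu_zero : Lu (0 : Fin n → R) = 1 := Units.ext Lb_zero
theorem Uu_zero : Uu (0 : Fin n → R) = 1 := Units.ext Ub_zero

/-- part of `v` away from the last coordinate -/
def vpos (n : ℕ) (v : Fin n → R) : Fin n → R := fun k => if (k : ℕ) = n - 1 then 0 else v k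

/-- part of `v` at the last coordinate -/
def vneg (n : ℕ) (v : Fin n → R) : Fin n → R := fun k => if (k : ℕ) = n - 1 then v k else 0

theorem vneg_add_vpos (v : Fin n → R) : vneg n v + vpos n v = v := by
  funext k
  simp only [vneg, vpos, Pi.add_apply]
  split_ifs <;> simp

theorem vpos_add_vneg (v : Fin n → R) : vpos n v + vneg n v = v := by
  funext k
  simp only [vneg, vpos, Pi.add_apply]
  split_ifs <;> simp

theorem vpos_last (v : Fin n → R) : ∀ k : Fin n, (k : ℕ) = n - 1 → vpos n v k = 0 := by
  intro k hk; simp [vpos, hk]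

theorem vneg_first (hn : 2 ≤ n) (v : Fin n → R) : ∀ k : Fin n, (k : ℕ) = 0 → vneg n v k = 0 := by
  intro k hk; simp only [vneg]; rw [if_neg (by omega)]

theorem list_prod_mem_pow {M : Type*} [Monoid M] (S : Set M) :
    ∀ l : List M, (∀ x ∈ l, x ∈ S) → l.prod ∈ S ^ l.length := by
  intro l
  induction l with
  | nil => intro _; simp only [List.prod_nil, List.length_nil, pow_zero]; exact Set.mem_one.mpr rfl
  | cons a t ih =>
    intro h
    rw [List.prod_cons, List.length_cons, pow_succ']
    exact Set.mul_mem_mul (h a (by simp)) (ih fun x hx => h x (by simp [hx]))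

end Stmt11
end P4

section Main

open Matrix Pointwise Stmt11

/-- For `n ≥ 2` and a unital ring `R` of stable range at most `n`:
`GL_{n+1}(R) = (G ∪ {c, c⁻¹})^19`, where `G = {diag(a,1) : a ∈ GLₙ(R)}` and `c` is the
cyclic block permutation matrix `[[0,1],[1ₙ,0]]`. -/
theorem stmt_11 {R : Type*} [Ring R] (n : ℕ) (hn : 2 ≤ n)
    (hsr : ∀ a : Fin (n + 1) → R, (∃ c : Fin (n + 1) → R, ∑ i, a i * c i = 1) →
      ∃ b c : Fin n → R, ∑ i : Fin n, (a i.castSucc + a (Fin.last n) * b i) * c i = 1)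
    (c : (Matrix (Fin n ⊕ Unit) (Fin n ⊕ Unit) R)ˣ)
    (hc : Units.val c = cycMat n R) :
    ∀ G : Set (Matrix (Fin n ⊕ Unit) (Fin n ⊕ Unit) R)ˣ,
      G = {u : (Matrix (Fin n ⊕ Unit) (Fin n ⊕ Unit) R)ˣ |
        ∃ a : (Matrix (Fin n) (Fin n) R)ˣ,
          Units.val u = Matrix.fromBlocks (Units.val a) 0 0 1} →
      (G ∪ {c, c⁻¹}) ^ 19 = Set.univ := by
  intro G hG
  rw [hG]
  show (Gset n R ∪ {c, c⁻¹}) ^ 19 = Set.univ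
  set S : Set (Matrix (Fin n ⊕ Unit) (Fin n ⊕ Unit) R)ˣ := Gset n R ∪ {c, c⁻¹} with hS
  apply Set.eq_univ_of_forall
  intro u
  classical
  set d : R := u.val (.inr ()) (.inr ()) with hd
  set a : Fin (n + 1) → R :=
    fun i => if h : (i : ℕ) < n then u.val (.inr ()) (.inl ⟨(i : ℕ), h⟩) else d with haa
  have hacast : ∀ i : Fin n, a i.castSucc = u.val (.inr ()) (.inl i) := by
    intro i
    rw [haa]
    simp only [Fin.coe_castSucc]
    rw [dif_pos i.isLt]
  have halast : a (Fin.last n) = d := by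
    rw [haa]
    simp only [Fin.val_last]
    rw [dif_neg (by omega)]
  have hrow : ∃ cc : Fin (n + 1) → R, ∑ i, a i * cc i = 1 := by
    refine ⟨fun i => if h : (i : ℕ) < n then u.inv (.inl ⟨(i : ℕ), h⟩) (.inr ())
      else u.inv (.inr ()) (.inr ()), ?_⟩
    have h1 : (u.val * u.inv) (.inr ()) (.inr ()) = 1 := by
      rw [u.val_inv]; simp [Matrix.one_apply]
    rw [Matrix.mul_apply, Fintype.sum_sum_type] at h1
    rw [Fin.sum_univ_castSucc]
    have e1 : ∀ i : Fin n,
        a i.castSucc * (if h : ((i.castSucc : Fin (n+1)) : ℕ) < n then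
            u.inv (.inl ⟨((i.castSucc : Fin (n+1)) : ℕ), h⟩) (.inr ()) else u.inv (.inr ()) (.inr ()))
          = u.val (.inr ()) (.inl i) * u.inv (.inl i) (.inr ()) := by
      intro i
      rw [hacast]
      congr 1
      simp only [Fin.coe_castSucc]
      rw [dif_pos i.isLt]
    rw [Finset.sum_congr rfl fun i _ => e1 i]
    rw [halast]
    simp only [Fin.val_last]
    rw [dif_neg (by omega)]
    simp only [Finset.univ_unique, Finset.sum_singleton] at h1
    rw [hd]
    exact h1
  obtain ⟨b, γ, hbγ⟩ := hsr a hrow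
  set c1 : Fin n → R := fun i => u.val (.inr ()) (.inl i) + d * b i with hc1def
  have hc1 : ∑ i, c1 i * γ i = 1 := by
    rw [← hbγ]
    refine Finset.sum_congr rfl fun i _ => ?_
    rw [hacast, halast]
  set w : Fin n → R := fun k => γ k * (1 - d) with hwdef
  set A1 := u * Lu b with hA1def
  set A2 := A1 * Uu w with hA2def
  set A3 := A2 * Lu (-c1) with hA3def
  have hA1l : ∀ l, A1.val (.inr ()) (.inl l) = c1 l := by
    intro l
    rw [hA1def, Units.val_mul, Lu_val, mul_Lb_inl']
  have hA1r : A1.val (.inr ()) (.inr ()) = d := by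
    rw [hA1def, Units.val_mul, Lu_val, mul_Lb_inr']
  have hA2l : ∀ l, A2.val (.inr ()) (.inl l) = c1 l := by
    intro l
    rw [hA2def, Units.val_mul, Uu_val, mul_Ub_inl']
    exact hA1l l
  have hA2r : A2.val (.inr ()) (.inr ()) = 1 := by
    rw [hA2def, Units.val_mul, Uu_val, mul_Ub_inr', hA1r]
    have e2 : ∀ k : Fin n, A1.val (.inr ()) (.inl k) * w k = (c1 k * γ k) * (1 - d) := by
      intro k
      rw [hA1l k, hwdef, mul_assoc]
    rw [Finset.sum_congr rfl fun k _ => e2 k, ← Finset.sum_mul, hc1, one_mul]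
    abel
  have hA3l : ∀ l, A3.val (.inr ()) (.inl l) = 0 := by
    intro l
    rw [hA3def, Units.val_mul, Lu_val, mul_Lb_inl', hA2l l, hA2r]
    simp
  have hA3r : A3.val (.inr ()) (.inr ()) = 1 := by
    rw [hA3def, Units.val_mul, Lu_val, mul_Lb_inr', hA2r]
  set q : Fin n → R := fun k => A3.val (.inl k) (.inr ()) with hqdef
  set D := Uu (-q) * A3 with hDdef
  have hDmem : D ∈ Gset n R := by
    apply mem_Gset
    · intro k
      rw [hDdef, Units.val_mul, Uu_val, Ub_mul_inl, hA3r]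
      simp [hqdef]
    · intro l
      rw [hDdef, Units.val_mul, Uu_val, Ub_mul_inr]
      exact hA3l l
    · rw [hDdef, Units.val_mul, Uu_val, Ub_mul_inr]
      exact hA3r
  have hu5 : u = Uu q * D * Lu c1 * Uu (-w) * Lu (-b) := by
    rw [hDdef, hA3def, hA2def, hA1def]
    rw [show Uu (-q) = (Uu q)⁻¹ from (Uu_inv q).symm,
        show Lu (-c1) = (Lu c1)⁻¹ from (Lu_inv c1).symm,
        show Uu (-w) = (Uu w)⁻¹ from (Uu_inv w).symm,
        show Lu (-b) = (Lu b)⁻¹ from (Lu_inv b).symm]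
    group
  have hsplitUq : Uu q = Uu (vneg n q) * Uu (vpos n q) := by rw [Uu_mul, vneg_add_vpos]
  have hsplitLc1 : Lu c1 = Lu (vpos n c1) * Lu (vneg n c1) := by rw [Lu_mul, vpos_add_vneg]
  have hsplitUw : Uu (-w) = Uu (vneg n (-w)) * Uu (vpos n (-w)) := by rw [Uu_mul, vneg_add_vpos]
  have hsplitLb : Lu (-b) = Lu (vpos n (-b)) * Lu (vneg n (-b)) := by rw [Lu_mul, vpos_add_vneg]
  set g1 := c⁻¹ * Uu (vneg n q) * c with hg1
  set g2 := c * Uu (vpos n q) * c⁻¹ with hg2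
  set g3 := c * Lu (vpos n c1) * c⁻¹ with hg3
  set g4 := (c⁻¹ * Lu (vneg n c1) * c) * (c⁻¹ * Uu (vneg n (-w)) * c) with hg4
  set g5 := (c * Uu (vpos n (-w)) * c⁻¹) * (c * Lu (vpos n (-b)) * c⁻¹) with hg5
  set g6 := c⁻¹ * Lu (vneg n (-b)) * c with hg6
  have hg1m : g1 ∈ Gset n R := conjU_mem' hn c hc _ (vneg_first hn _)
  have hg2m : g2 ∈ Gset n R := conjU_mem hn c hc _ (vpos_last _)
  have hg3m : g3 ∈ Gset n R := conjL_mem hn c hc _ (vpos_last _)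
  have hg4m : g4 ∈ Gset n R :=
    Gset_mul (conjL_mem' hn c hc _ (vneg_first hn _)) (conjU_mem' hn c hc _ (vneg_first hn _))
  have hg5m : g5 ∈ Gset n R :=
    Gset_mul (conjU_mem hn c hc _ (vpos_last _)) (conjL_mem hn c hc _ (vpos_last _))
  have hg6m : g6 ∈ Gset n R := conjL_mem' hn c hc _ (vneg_first hn _)
  set L : List (Matrix (Fin n ⊕ Unit) (Fin n ⊕ Unit) R)ˣ :=
    [c, g1, c⁻¹, c⁻¹, g2, c, D, c⁻¹, g3, c, c, g4, c⁻¹, c⁻¹, g5, c, c, g6, c⁻¹] with hL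
  have hmem : ∀ x ∈ L, x ∈ S := by
    intro x hx
    rw [hL] at hx
    simp only [List.mem_cons, List.not_mem_nil, or_false] at hx
    rw [hS]
    rcases hx with rfl|rfl|rfl|rfl|rfl|rfl|rfl|rfl|rfl|rfl|rfl|rfl|rfl|rfl|rfl|rfl|rfl|rfl|rfl
    · exact Set.mem_union_right _ (by simp)
    · exact Set.mem_union_left _ hg1m
    · exact Set.mem_union_right _ (by simp)
    · exact Set.mem_union_right _ (by simp)
    · exact Set.mem_union_left _ hg2m
    · exact Set.mem_union_right _ (by simp)
    · exact Set.mem_union_left _ hDmem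
    · exact Set.mem_union_right _ (by simp)
    · exact Set.mem_union_left _ hg3m
    · exact Set.mem_union_right _ (by simp)
    · exact Set.mem_union_right _ (by simp)
    · exact Set.mem_union_left _ hg4m
    · exact Set.mem_union_right _ (by simp)
    · exact Set.mem_union_right _ (by simp)
    · exact Set.mem_union_left _ hg5m
    · exact Set.mem_union_right _ (by simp)
    · exact Set.mem_union_right _ (by simp)
    · exact Set.mem_union_left _ hg6m
    · exact Set.mem_union_right _ (by simp)
  have hprod : L.prod = u := by
    rw [hL]
    simp only [List.prod_cons, List.prod_nil, mul_one]
    rw [hu5, hsplitUq, hsplitLc1, hsplitUw, hsplitLb, hg1, hg2, hg3, hg4, hg5, hg6]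
    group
  have hlen : L.length = 19 := by rw [hL]; rfl
  have hfin := list_prod_mem_pow S L hmem
  rw [hlen, hprod] at hfin
  exact hfin

end Main
end
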